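/- Every normal (T4) MT-algebra is a completely regular (T3½) MT-algebra. -/
import Mathlib


universe u

/-- An MT-algebra: a complete Boolean algebra equipped with an interior operator. -/
structure MTAlg (M : Type u) [CompleteBooleanAlgebra M] where
  box : M → M
  box_top : box ⊤ = ⊤
  box_inf : ∀ a b : M, box (a ⊓ b) = box a ⊓ box b
  box_le : ∀ a : M, box a ≤ a
  box_idem : ∀ a : M, box a ≤ box (box a)

namespace MTAlg

variable {M : Type u} [CompleteBooleanAlgebra M] (T : MTAlg M)

/-- The closure operator `◇a = (□(aᶜ))ᶜ`. -/
def dia (a : M) : M := (T.box aᶜ)ᶜ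

/-- An element is open if `□a = a`. -/
def IsOp (a : M) : Prop := T.box a = a

/-- An element is closed if `◇a = a`. -/
def IsCl (a : M) : Prop := T.dia a = a

/-- The set `O(M)` of open elements. -/
def opens : Set M := {a | T.IsOp a}

/-- The set `C(M)` of closed elements. -/
def closeds : Set M := {a | T.IsCl a}

/-- A subset join-generates `M` if every element of `M` is a supremum of a subset of it. -/
def JoinGenerates (S : Set M) : Prop := ∀ a : M, ∃ B ⊆ S, a = sSup B

theorem box_mono {a b : M} (h : a ≤ b) : T.box a ≤ T.box b := by
  have hab : a ⊓ b = a := inf_eq_left.mpr h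
  calc T.box a = T.box (a ⊓ b) := by rw [hab]
    _ = T.box a ⊓ T.box b := T.box_inf a b
    _ ≤ T.box b := inf_le_right

theorem isOp_sSup {S : Set M} (h : ∀ a ∈ S, T.IsOp a) : T.IsOp (sSup S) := by
  refine le_antisymm (T.box_le _) (sSup_le fun a ha => ?_)
  calc a = T.box a := (h a ha).symm
    _ ≤ T.box (sSup S) := T.box_mono (le_sSup ha)

theorem atom_le_sSup {x : M} (hx : IsAtom x) {S : Set M} (h : x ≤ sSup S) :
    ∃ s ∈ S, x ≤ s := by
  by_contra hc
  push_neg at hc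
  have h2 : ∀ b ∈ S, x ⊓ b = ⊥ := by
    intro b hb
    rcases hx.le_iff.mp (inf_le_left : x ⊓ b ≤ x) with h' | h'
    · exact h'
    · exact absurd (h' ▸ inf_le_right) (hc b hb)
  have h3 : x ⊓ sSup S = ⊥ := by
    rw [inf_sSup_eq]
    simp only [iSup_eq_bot]
    intro b hb
    exact h2 b hb
  have hx' : x = ⊥ := by
    rw [inf_eq_left.mpr h] at h3
    exact h3
  exact hx.1 hx'

/-- `η(a)` : the set of atoms below `a`. -/
def eta (a : M) : Set {x : M // IsAtom x} := {x | (x : M) ≤ a}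

/-- The topology `τ = {η(a) | a ∈ O(M)}` on the set of atoms of `M`. -/
def atomTopology : TopologicalSpace {x : M // IsAtom x} where
  IsOpen U := ∃ a : M, T.IsOp a ∧ U = eta a
  isOpen_univ := ⟨⊤, T.box_top, by ext x; simp [eta]⟩
  isOpen_inter := by
    rintro U V ⟨a, ha, rfl⟩ ⟨b, hb, rfl⟩
    refine ⟨a ⊓ b, ?_, ?_⟩
    · show T.box (a ⊓ b) = a ⊓ b
      rw [T.box_inf, ha, hb]
    · ext x
      simp [eta, le_inf_iff]
  isOpen_sUnion := by
    intro C hC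
    refine ⟨sSup {a | T.IsOp a ∧ eta a ∈ C}, T.isOp_sSup (fun a ha => ha.1), ?_⟩
    ext x
    constructor
    · rintro ⟨U, hU, hxU⟩
      obtain ⟨a, ha, rfl⟩ := hC U hU
      exact le_trans hxU (le_sSup ⟨ha, hU⟩)
    · intro hx
      obtain ⟨s, hs, hxs⟩ := atom_le_sSup x.2 hx
      exact ⟨eta s, hs.2, hxs⟩

/-- A completely prime filter of the frame `O(M)` (with arbitrary suprema computed in `M`). -/
structure IsCPF (p : Set M) : Prop where
  subset_opens : p ⊆ T.opens
  top_mem : ⊤ ∈ p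
  bot_notMem : ⊥ ∉ p
  mem_of_le : ∀ a ∈ p, ∀ b ∈ T.opens, a ≤ b → b ∈ p
  inf_mem : ∀ a ∈ p, ∀ b ∈ p, a ⊓ b ∈ p
  prime : ∀ S ⊆ T.opens, sSup S ∈ p → ∃ s ∈ S, s ∈ p

/-- The underlying set of `θ(x) = {a ∈ O(M) | x ≤ a}`. -/
def thetaSet (x : M) : Set M := {a | T.IsOp a ∧ x ≤ a}

/-- An element is saturated if it is an infimum of a set of open elements. -/
def IsSat (a : M) : Prop := ∃ S ⊆ T.opens, a = sInf S

/-- Weakly locally closed: the infimum of a saturated element and a closed element. -/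
def IsWLC (a : M) : Prop := ∃ s c : M, T.IsSat s ∧ T.IsCl c ∧ a = s ⊓ c

/-- Locally closed: the infimum of an open element and a closed element. -/
def IsLC (a : M) : Prop := ∃ u c : M, T.IsOp u ∧ T.IsCl c ∧ a = u ⊓ c

/-- `M` is a `T₀`-algebra if the weakly locally closed elements join-generate `M`. -/
def T0 : Prop := JoinGenerates {a | T.IsWLC a}

/-- `M` is a `T_{1/2}`-algebra if the locally closed elements join-generate `M`. -/
def THalf : Prop := JoinGenerates {a | T.IsLC a}

/-- `M` is a `T₁`-algebra if the closed elements join-generate `M`. -/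
def T1 : Prop := JoinGenerates T.closeds

/-- A join-irreducible element of `C(M)`. -/
def JoinIrred (p : M) : Prop :=
  T.IsCl p ∧ p ≠ ⊥ ∧ ∀ a b : M, T.IsCl a → T.IsCl b → p = a ⊔ b → p = a ∨ p = b

/-- `M` is weakly sober if every join-irreducible element of `C(M)` is `◇x` for some atom `x`. -/
def WeaklySober : Prop := ∀ p : M, T.JoinIrred p → ∃ x : M, IsAtom x ∧ p = T.dia x

/-- `M` is sober if it is weakly sober and a `T₀`-algebra. -/
def Sober : Prop := T.WeaklySober ∧ T.T0

/-- `a ∈ GC(M)` : `a` is approximated from above by regular closed elements. -/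
def IsGC (a : M) : Prop := a = sInf {b | ∃ c : M, a ≤ T.box c ∧ b = T.dia (T.box c)}

/-- `M` is a Hausdorff (T₂) algebra if `GC(M)` join-generates `M`. -/
def Hausdorff : Prop := JoinGenerates {a | T.IsGC a}

/-- `a ◁ b` iff `◇a ≤ □b`. -/
def tri (a b : M) : Prop := T.dia a ≤ T.box b

/-- `M` is a regular (T₃) algebra. -/
def Regular : Prop :=
  T.T1 ∧ ∀ a : M, T.IsOp a → a = sSup {b | T.IsOp b ∧ T.tri b a}

/-- `a ◁◁ b` : there is a family `(c_p)` indexed by `p ∈ ℚ ∩ [0,1]` interpolating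
between `a` and `b` with `c_p ◁ c_q` whenever `p < q`. -/
def triQ (a b : M) : Prop :=
  ∃ c : ℚ → M, a ≤ c 0 ∧ c 1 ≤ b ∧
    ∀ p q : ℚ, 0 ≤ p → p < q → q ≤ 1 → T.tri (c p) (c q)

/-- `M` is a completely regular (T₃½) algebra. -/
def CompletelyRegular : Prop :=
  T.T1 ∧ ∀ a : M, T.IsOp a → a = sSup {b | T.IsOp b ∧ T.triQ b a}

/-- The pseudocomplement of `b` in the frame `O(M)`. -/
def pstarO (b : M) : M := sSup {u | T.IsOp u ∧ u ⊓ b = ⊥}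

/-- The rather-below relation `b ≺ a` in the frame `O(M)`. -/
def precO (b a : M) : Prop := T.pstarO b ⊔ a = ⊤

/-- The completely-below relation `b ≺≺ a` in the frame `O(M)`. -/
def precQO (b a : M) : Prop :=
  ∃ c : ℚ → M, (∀ p : ℚ, 0 ≤ p → p ≤ 1 → T.IsOp (c p)) ∧ b ≤ c 0 ∧ c 1 ≤ a ∧
    ∀ p q : ℚ, 0 ≤ p → p < q → q ≤ 1 → T.precO (c p) (c q)

/-- The frame `O(M)` is completely regular. -/
def FrameCompletelyRegular : Prop :=
  ∀ a : M, T.IsOp a → a = sSup {b | T.IsOp b ∧ T.precQO b a}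

/-- `M` is a normal (T₄) algebra. -/
def Normal : Prop :=
  T.T1 ∧ ∀ c d : M, T.IsCl c → T.IsCl d → c ⊓ d = ⊥ →
    ∃ a b : M, T.IsOp a ∧ T.IsOp b ∧ a ⊓ b = ⊥ ∧ c ≤ a ∧ d ≤ b

end MTAlg
namespace MTAlg

variable {M : Type u} [CompleteBooleanAlgebra M] (T : MTAlg M)

theorem box_box (a : M) : T.box (T.box a) = T.box a :=
  le_antisymm (T.box_le _) (T.box_idem a)

theorem le_dia (a : M) : a ≤ T.dia a := by
  have h := compl_le_compl (T.box_le aᶜ)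
  simpa [dia] using h

theorem dia_mono {a b : M} (h : a ≤ b) : T.dia a ≤ T.dia b :=
  compl_le_compl (T.box_mono (compl_le_compl h))

theorem dia_dia (a : M) : T.dia (T.dia a) = T.dia a := by
  simp [dia, compl_compl, box_box]

theorem isCl_dia (a : M) : T.IsCl (T.dia a) := T.dia_dia a

theorem isCl_compl_of_isOp {a : M} (ha : T.IsOp a) : T.IsCl aᶜ := by
  show T.dia aᶜ = aᶜ
  rw [dia, compl_compl, show T.box a = a from ha]

theorem dia_le_of_isOp {x y : M} (h : T.dia x ≤ y) (hy : T.IsOp y) :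
    T.dia x ≤ T.box y := h.trans (le_of_eq hy.symm)

theorem interp (hN : T.Normal) {c a : M} (hc : T.IsCl c) (ha : T.IsOp a)
    (h : c ≤ a) : ∃ u : M, T.IsOp u ∧ c ≤ u ∧ T.dia u ≤ a := by
  have hac : T.IsCl aᶜ := T.isCl_compl_of_isOp ha
  have hdisj : c ⊓ aᶜ = ⊥ := by
    have h1 : c ⊓ aᶜ ≤ a ⊓ aᶜ := inf_le_inf_right _ h
    rw [inf_compl_eq_bot] at h1
    exact le_bot_iff.mp h1
  obtain ⟨x, y, hx, hy, hxy, hcx, hay⟩ := hN.2 c aᶜ hc hac hdisj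
  refine ⟨x, hx, hcx, ?_⟩
  have hxyc : x ≤ yᶜ := by
    have hd : Disjoint x y := disjoint_iff.mpr hxy
    exact hd.le_compl_right
  have h2 : T.dia x ≤ yᶜ := by
    rw [dia, compl_le_compl_iff_le]
    calc y = T.box y := hy.symm
      _ ≤ T.box xᶜ := T.box_mono (by rwa [le_compl_comm] at hxyc)
  refine h2.trans ?_
  have := compl_le_compl hay
  simpa using this

end MTAlg
namespace MTAlg

variable {M : Type u} [CompleteBooleanAlgebra M]

open Classical in
/-- One step of the Urysohn-type recursion. -/
noncomputable def urgBody (T : MTAlg M) (e : ℕ → ℚ) (n : ℕ)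
    (prev : ∀ i, i < n → M) : M :=
  if hd : ∃ i, ∃ _ : i < n, e i = e n then
    prev hd.choose hd.choose_spec.choose
  else if 0 ≤ e n ∧ e n ≤ 1 then
    if hlo : ∃ i, (∃ _ : i < n, (0 ≤ e i ∧ e i ≤ 1) ∧ e i < e n) ∧
        ∀ j, j < n → (0 ≤ e j ∧ e j ≤ 1) → e j < e n → e j ≤ e i then
      if hhi : ∃ j, (∃ _ : j < n, (0 ≤ e j ∧ e j ≤ 1) ∧ e n < e j) ∧
          ∀ k, k < n → (0 ≤ e k ∧ e k ≤ 1) → e n < e k → e j ≤ e k then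
        if hint : ∃ x, T.IsOp x ∧
            T.dia (prev hlo.choose hlo.choose_spec.1.choose) ≤ x ∧
            T.dia x ≤ prev hhi.choose hhi.choose_spec.1.choose then
          hint.choose
        else ⊥
      else ⊥
    else ⊥
  else ⊥

noncomputable def urg (T : MTAlg M) (e : ℕ → ℚ) (u w : M) : ℕ → M
  | 0 => u
  | 1 => w
  | (n+2) => urgBody T e (n+2) (fun i _hi => urg T e u w i)
termination_by n => n
decreasing_by exact _hi

end MTAlg
namespace MTAlg

variable {M : Type u} [CompleteBooleanAlgebra M]

theorem urg_inv (T : MTAlg M) (hN : T.Normal) (e : ℕ → ℚ) (u w : M)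
    (he0 : e 0 = 0) (he1 : e 1 = 1) (hu : T.IsOp u) (hw : T.IsOp w)
    (huw : T.dia u ≤ w) : ∀ n : ℕ,
    ((0 ≤ e n ∧ e n ≤ 1) → T.IsOp (urg T e u w n)) ∧
    (∀ i, i < n → (0 ≤ e i ∧ e i ≤ 1) → (0 ≤ e n ∧ e n ≤ 1) →
      (e i < e n → T.dia (urg T e u w i) ≤ T.box (urg T e u w n)) ∧
      (e n < e i → T.dia (urg T e u w n) ≤ T.box (urg T e u w i)) ∧
      (e i = e n → urg T e u w i = urg T e u w n)) := by
  intro n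
  induction n using Nat.strong_induction_on with
  | _ n ih =>
  match n with
  | 0 =>
    refine ⟨fun _ => by simpa [urg] using hu, fun i hi => absurd hi (Nat.not_lt_zero i)⟩
  | 1 =>
    refine ⟨fun _ => by simpa [urg] using hw, fun i hi hic hnc => ?_⟩
    interval_cases i
    simp only [urg, he0, he1]
    refine ⟨fun _ => T.dia_le_of_isOp huw hw, fun h => absurd h (by norm_num),
      fun h => absurd h (by norm_num)⟩
  | (n+2) =>
    have pop : ∀ i, i < n + 2 → (0 ≤ e i ∧ e i ≤ 1) → T.IsOp (urg T e u w i) :=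
      fun i hi => (ih i hi).1
    have ptri : ∀ i j, i < n + 2 → j < n + 2 → (0 ≤ e i ∧ e i ≤ 1) →
        (0 ≤ e j ∧ e j ≤ 1) → e i < e j →
        T.dia (urg T e u w i) ≤ T.box (urg T e u w j) := by
      intro i j hi hj hic hjc hlt
      rcases lt_trichotomy i j with h | h | h
      · exact ((ih j hj).2 i h hic hjc).1 hlt
      · exact absurd hlt (by rw [h]; exact lt_irrefl _)
      · exact ((ih i hi).2 j h hjc hic).2.1 hlt
    have peq : ∀ i j, i < n + 2 → j < n + 2 → (0 ≤ e i ∧ e i ≤ 1) →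
        (0 ≤ e j ∧ e j ≤ 1) → e i = e j → urg T e u w i = urg T e u w j := by
      intro i j hi hj hic hjc heq
      rcases lt_trichotomy i j with h | h | h
      · exact ((ih j hj).2 i h hic hjc).2.2 heq
      · rw [h]
      · exact (((ih i hi).2 j h hjc hic).2.2 heq.symm).symm
    have hgN : urg T e u w (n+2) = urgBody T e (n+2) (fun i _ => urg T e u w i) := by
      rw [urg]
    rw [hgN, urgBody]
    split_ifs with hd hicc hlo hhi hint
    · -- duplicate case
      obtain ⟨hi0lt, hi0eq⟩ : ∃ _ : hd.choose < n + 2, e hd.choose = e (n+2) :=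
        ⟨hd.choose_spec.choose, hd.choose_spec.choose_spec⟩
      have hi0c : (0 ≤ e (n+2) ∧ e (n+2) ≤ 1) → (0 ≤ e hd.choose ∧ e hd.choose ≤ 1) := by
        rw [hi0eq]; exact id
      refine ⟨fun hc => pop _ hi0lt (hi0c hc), fun i hi hic hnc => ?_⟩
      refine ⟨fun hlt => ptri i _ hi hi0lt hic (hi0c hnc) (by rwa [hi0eq]),
        fun hlt => ptri _ i hi0lt hi (hi0c hnc) hic (by rwa [hi0eq]),
        fun heq => peq i _ hi hi0lt hic (hi0c hnc) (by rw [heq, hi0eq])⟩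
    · -- fresh case, all witnesses exist
      obtain ⟨histar, ⟨histarc, histarlt⟩⟩ :
          ∃ _ : hlo.choose < n + 2, (0 ≤ e hlo.choose ∧ e hlo.choose ≤ 1) ∧
            e hlo.choose < e (n+2) :=
        ⟨hlo.choose_spec.1.choose, hlo.choose_spec.1.choose_spec⟩
      have hmax := hlo.choose_spec.2
      obtain ⟨hjstar, ⟨hjstarc, hjstarlt⟩⟩ :
          ∃ _ : hhi.choose < n + 2, (0 ≤ e hhi.choose ∧ e hhi.choose ≤ 1) ∧
            e (n+2) < e hhi.choose :=
        ⟨hhi.choose_spec.1.choose, hhi.choose_spec.1.choose_spec⟩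
      have hmin := hhi.choose_spec.2
      obtain ⟨hxop, hxlo, hxhi⟩ := hint.choose_spec
      refine ⟨fun _ => hxop, fun i hi hic hnc => ?_⟩
      refine ⟨fun hlt => ?_, fun hlt => ?_, fun heq => absurd ⟨i, hi, heq⟩ hd⟩
      · -- e i < e (n+2) : dia (g i) ≤ box x
        rcases eq_or_lt_of_le (hmax i hi hic hlt) with h | h
        · rw [peq i _ hi histar hic histarc h]
          exact T.dia_le_of_isOp hxlo hxop
        · have c1 : T.dia (urg T e u w i) ≤ T.box (urg T e u w hlo.choose) :=
            ptri i _ hi histar hic histarc h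
          refine (c1.trans (T.box_le _)).trans ((T.le_dia _).trans (T.dia_le_of_isOp hxlo hxop))
      · -- e (n+2) < e i : dia x ≤ box (g i)
        rcases eq_or_lt_of_le (hmin i hi hic hlt) with h | h
        · rw [← peq _ i hjstar hi hjstarc hic h]
          exact T.dia_le_of_isOp hxhi (pop _ hjstar hjstarc)
        · exact hxhi.trans ((T.le_dia _).trans (ptri _ i hjstar hi hjstarc hic h))
    · -- hint fails : contradiction
      exfalso
      have c1 : T.dia (urg T e u w hlo.choose) ≤ urg T e u w hhi.choose := by
        refine (ptri hlo.choose hhi.choose hlo.choose_spec.1.choose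
          hhi.choose_spec.1.choose hlo.choose_spec.1.choose_spec.1
          hhi.choose_spec.1.choose_spec.1 ?_).trans (T.box_le _)
        exact lt_trans hlo.choose_spec.1.choose_spec.2 hhi.choose_spec.1.choose_spec.2
      obtain ⟨x, hx1, hx2, hx3⟩ := T.interp hN (T.isCl_dia _)
        (pop _ hhi.choose_spec.1.choose hhi.choose_spec.1.choose_spec.1) c1
      exact hint ⟨x, hx1, hx2, hx3⟩
    · -- hhi fails : contradiction
      exfalso
      classical
      have h1N : e (n+2) < 1 := by
        rcases lt_or_eq_of_le hicc.2 with h | h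
        · exact h
        · exact absurd ⟨1, Nat.one_lt_succ_succ n, by rw [he1, h]⟩ hd
      set F := (Finset.range (n+2)).filter
        (fun i => (0 ≤ e i ∧ e i ≤ 1) ∧ e (n+2) < e i) with hF
      have h1F : 1 ∈ F := by
        simp only [hF, Finset.mem_filter, Finset.mem_range, he1]
        exact ⟨Nat.one_lt_succ_succ n, ⟨by norm_num, le_refl 1⟩, h1N⟩
      obtain ⟨b, hbF, hbmin⟩ := Finset.exists_min_image F e ⟨1, h1F⟩
      simp only [hF, Finset.mem_filter, Finset.mem_range] at hbF
      refine hhi ⟨b, ⟨hbF.1, hbF.2⟩, fun k hk hkc hklt => ?_⟩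
      exact hbmin k (by simp only [hF, Finset.mem_filter, Finset.mem_range]; exact ⟨hk, hkc, hklt⟩)
    · -- hlo fails : contradiction
      exfalso
      classical
      have h0N : 0 < e (n+2) := by
        rcases lt_or_eq_of_le hicc.1 with h | h
        · exact h
        · exact absurd ⟨0, Nat.succ_pos _, by rw [he0, ← h]⟩ hd
      set F := (Finset.range (n+2)).filter
        (fun i => (0 ≤ e i ∧ e i ≤ 1) ∧ e i < e (n+2)) with hF
      have h0F : 0 ∈ F := by
        simp only [hF, Finset.mem_filter, Finset.mem_range, he0]
        exact ⟨Nat.succ_pos _, ⟨le_refl 0, by norm_num⟩, h0N⟩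
      obtain ⟨b, hbF, hbmax⟩ := Finset.exists_max_image F e ⟨0, h0F⟩
      simp only [hF, Finset.mem_filter, Finset.mem_range] at hbF
      refine hlo ⟨b, ⟨hbF.1, hbF.2⟩, fun j hj hjc hjlt => ?_⟩
      exact hbmax j (by simp only [hF, Finset.mem_filter, Finset.mem_range]; exact ⟨hj, hjc, hjlt⟩)
    · -- out of range
      exact ⟨fun hc => absurd hc hicc, fun i hi hic hnc => absurd hnc hicc⟩

end MTAlg
namespace MTAlg

variable {M : Type u} [CompleteBooleanAlgebra M]

theorem key (T : MTAlg M) (hN : T.Normal) {c a : M} (hc : T.IsCl c)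
    (ha : T.IsOp a) (hca : c ≤ a) : ∃ b : M, T.IsOp b ∧ c ≤ b ∧ T.triQ b a := by
  obtain ⟨u, hu, hcu, hua⟩ := T.interp hN hc ha hca
  obtain ⟨w, hw, huw, hwa⟩ := T.interp hN (T.isCl_dia u) ha hua
  obtain ⟨f, hf⟩ := exists_surjective_nat ℚ
  set e : ℕ → ℚ := fun n => if n = 0 then 0 else if n = 1 then 1 else f (n-2) with he
  have he0 : e 0 = 0 := by simp [he]
  have he1 : e 1 = 1 := by simp [he]
  have hsurj : ∀ q : ℚ, ∃ n, e n = q := by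
    intro q
    obtain ⟨k, hk⟩ := hf q
    exact ⟨k + 2, by simp [he, hk]⟩
  have inv := urg_inv T hN e u w he0 he1 hu hw huw
  have peq : ∀ i j, (0 ≤ e i ∧ e i ≤ 1) → (0 ≤ e j ∧ e j ≤ 1) → e i = e j →
      urg T e u w i = urg T e u w j := by
    intro i j hic hjc heq
    rcases lt_trichotomy i j with h | h | h
    · exact ((inv j).2 i h hic hjc).2.2 heq
    · rw [h]
    · exact (((inv i).2 j h hjc hic).2.2 heq.symm).symm
  have ptri : ∀ i j, (0 ≤ e i ∧ e i ≤ 1) → (0 ≤ e j ∧ e j ≤ 1) → e i < e j →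
      T.dia (urg T e u w i) ≤ T.box (urg T e u w j) := by
    intro i j hic hjc hlt
    rcases lt_trichotomy i j with h | h | h
    · exact ((inv j).2 i h hic hjc).1 hlt
    · exact absurd hlt (by rw [h]; exact lt_irrefl _)
    · exact ((inv i).2 j h hjc hic).2.1 hlt
  have icc01 : ((0:ℚ) ≤ 0 ∧ (0:ℚ) ≤ 1) := ⟨le_refl 0, by norm_num⟩
  have icc11 : ((0:ℚ) ≤ 1 ∧ (1:ℚ) ≤ 1) := ⟨by norm_num, le_refl 1⟩
  refine ⟨u, hu, hcu, fun q => urg T e u w (hsurj q).choose, ?_, ?_, ?_⟩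
  · have h0 : urg T e u w (hsurj (0:ℚ)).choose = urg T e u w 0 := by
      refine peq _ 0 ?_ (by rw [he0]; exact icc01) (by rw [(hsurj 0).choose_spec, he0])
      rw [(hsurj 0).choose_spec]; exact icc01
    show u ≤ urg T e u w (hsurj (0:ℚ)).choose
    rw [h0]; simp [urg]
  · have h1 : urg T e u w (hsurj (1:ℚ)).choose = urg T e u w 1 := by
      refine peq _ 1 ?_ (by rw [he1]; exact icc11) (by rw [(hsurj 1).choose_spec, he1])
      rw [(hsurj 1).choose_spec]; exact icc11
    show urg T e u w (hsurj (1:ℚ)).choose ≤ a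
    rw [h1]
    have : urg T e u w 1 = w := by simp [urg]
    rw [this]
    exact (T.le_dia w).trans hwa
  · intro p q hp hpq hq
    show T.dia (urg T e u w (hsurj p).choose) ≤ T.box (urg T e u w (hsurj q).choose)
    refine ptri _ _ ?_ ?_ ?_
    · rw [(hsurj p).choose_spec]; exact ⟨hp, le_of_lt (lt_of_lt_of_le hpq hq)⟩
    · rw [(hsurj q).choose_spec]; exact ⟨le_of_lt (lt_of_le_of_lt hp hpq), hq⟩
    · rw [(hsurj p).choose_spec, (hsurj q).choose_spec]; exact hpq

end MTAlg

/-- every normal (T₄) MT-algebra is a completely regular (T₃½)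
MT-algebra. -/
theorem statement19 {M : Type u} [CompleteBooleanAlgebra M] (T : MTAlg M)
    (hN : T.Normal) : T.CompletelyRegular := by
  refine ⟨hN.1, fun a ha => le_antisymm ?_ ?_⟩
  · obtain ⟨B, hB, hBa⟩ := hN.1 a
    conv_lhs => rw [hBa]
    refine sSup_le fun c hcB => ?_
    have hc : T.IsCl c := hB hcB
    have hca : c ≤ a := hBa ▸ le_sSup hcB
    obtain ⟨b, hb, hcb, hba⟩ := MTAlg.key T hN hc ha hca
    exact hcb.trans (le_sSup ⟨hb, hba⟩)
  · refine sSup_le ?_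
    rintro b ⟨hb, g, hbg, hg1, hgtri⟩
    have h01 := hgtri 0 1 (le_refl 0) (by norm_num) (le_refl 1)
    exact hbg.trans ((T.le_dia _).trans (h01.trans ((T.box_le _).trans hg1)))
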